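/- Let A be a commutative ring and M a finite length A-module. Then M decomposes as a direct sum of its localizations at the finitely many maximal ideals in its support: M ≅ ⊕_{𝔪 ∈ Supp(M)} M_𝔪. -/

import Mathlib

/-!
Since `M` is finite and Artinian, `A ⧸ Ann M` is an Artinian ring. Hence `Supp M = V(Ann M)` is
a finite set of maximal ideals `𝔪₁, …, 𝔪ₖ`, and the radical of `Ann M` is nilpotent modulo
`Ann M`, so `(𝔪₁ ⋯ 𝔪ₖ)ⁿ` kills `M` for some `n`. The `𝔪ᵢⁿ` are pairwise coprime, so by the
Chinese remainder theorem `M` is the internal direct sum of its `𝔪ᵢⁿ`-torsion submodules `Mᵢ`.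
The projection `M → Mᵢ` is a localization at `𝔪ᵢ`: elements outside `𝔪ᵢ` act invertibly on
`Mᵢ`, and by prime avoidance some element outside `𝔪ᵢ` kills every `Mⱼ` with `j ≠ i`.
-/

open DirectSum Function Module Submodule

section

variable {R M : Type*} [CommRing R] [AddCommGroup M] [Module R M]

theorem Module.isArtinianRing_quotient_annihilator [Module.Finite R M] [IsArtinian R M] :
    IsArtinianRing (R ⧸ annihilator R M) := by
  obtain ⟨n, v, hv⟩ := Module.Finite.exists_fin (R := R) (M := M)
  let φ : R →ₗ[R] Fin n → M := LinearMap.pi fun i => LinearMap.toSpanSingleton R M (v i)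
  have hker : LinearMap.ker φ = annihilator R M := by
    ext r
    rw [LinearMap.mem_ker, ← annihilator_top, ← hv, mem_annihilator_span,
      Set.forall_subtype_range_iff]
    simp [φ, funext_iff]
  rw [← hker]
  have : IsArtinian R (R ⧸ LinearMap.ker φ) :=
    φ.quotKerEquivRange.isArtinian_iff.mpr inferInstance
  exact isArtinian_of_tower R this

theorem Ideal.exists_radical_pow_le_of_isArtinianRing_quotient (I : Ideal R)
    [IsArtinianRing (R ⧸ I)] : ∃ n, I.radical ^ n ≤ I := by
  obtain ⟨n, hn⟩ := IsArtinianRing.isNilpotent_nilradical (R := R ⧸ I)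
  have hrad : I.radical = (nilradical (R ⧸ I)).comap (Ideal.Quotient.mk I) := by
    rw [nilradical, zero_eq_bot, comap_radical, ← RingHom.ker_eq_comap_bot, mk_ker]
  refine ⟨n, ?_⟩
  calc I.radical ^ n ≤ (nilradical (R ⧸ I) ^ n).comap (Ideal.Quotient.mk I) :=
        hrad ▸ le_comap_pow _ n
    _ = I := by rw [hn, zero_eq_bot, ← RingHom.ker_eq_comap_bot, mk_ker]

theorem Module.support_eq_range_comap_quotient_annihilator [Module.Finite R M] :
    support R M = Set.range (PrimeSpectrum.comap (Ideal.Quotient.mk (annihilator R M))) := by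
  rw [range_comap_of_surjective _ _ Ideal.Quotient.mk_surjective, Ideal.mk_ker,
    support_eq_zeroLocus]

theorem Module.finite_support_of_isArtinianRing_quotient [Module.Finite R M]
    [IsArtinianRing (R ⧸ annihilator R M)] : (support R M).Finite := by
  rw [support_eq_range_comap_quotient_annihilator]
  exact Set.finite_range _

theorem Module.isMaximal_of_mem_support_of_isArtinianRing_quotient [Module.Finite R M]
    [IsArtinianRing (R ⧸ annihilator R M)] {p : PrimeSpectrum R} (hp : p ∈ support R M) :
    p.asIdeal.IsMaximal := by
  rw [support_eq_range_comap_quotient_annihilator] at hp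
  obtain ⟨P, rfl⟩ := hp
  exact Ideal.comap_isMaximal_of_surjective _ Ideal.Quotient.mk_surjective

theorem Module.prod_le_radical_annihilator [Module.Finite R M] {s : Finset (PrimeSpectrum R)}
    (hs : support R M ⊆ s) : ∏ p ∈ s, p.asIdeal ≤ (annihilator R M).radical := by
  rw [Ideal.radical_eq_sInf]
  refine le_sInf fun J ⟨hJ, hJp⟩ => Ideal.prod_le_inf.trans ?_
  exact Finset.inf_le (f := PrimeSpectrum.asIdeal) (b := ⟨J, hJp⟩)
    (hs (mem_support_iff_of_finite.mpr hJ))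

theorem Module.isUnit_algebraMap_end_of_isTorsionBySet_pow {q : Ideal R} [q.IsMaximal] {n : ℕ}
    (hM : IsTorsionBySet R M (q ^ n : Ideal R)) {t : R} (ht : t ∉ q) :
    IsUnit (algebraMap R (End R M) t) := by
  have hcop : IsCoprime q (Ideal.span {t}) := by
    obtain ⟨c, a, ha, hca⟩ := Ideal.IsMaximal.exists_inv ‹_› ht
    exact Ideal.isCoprime_iff_exists.mpr
      ⟨a, ha, c * t, Ideal.mem_span_singleton'.mpr ⟨c, rfl⟩, by rw [add_comm, hca]⟩
  obtain ⟨b, hb, _, hd, hbd⟩ := (hcop.pow_left (m := n)).exists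
  obtain ⟨c, rfl⟩ := Ideal.mem_span_singleton'.mp hd
  have hct : algebraMap R (End R M) (c * t) = 1 := by
    ext x
    have hbx : b • x = 0 := @hM x ⟨b, hb⟩
    calc (c * t) • x = b • x + (c * t) • x := by rw [hbx, zero_add]
      _ = x := by rw [← add_smul, hbd, one_smul]
  exact ⟨⟨_, algebraMap R _ c, by rw [← map_mul, mul_comm, hct], by rw [← map_mul, hct]⟩,
    rfl⟩

theorem IsLocalizedModule.of_surjective {N : Type*} [AddCommGroup N] [Module R N]
    (S : Submonoid R) (f : M →ₗ[R] N) (hf : Surjective f)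
    (hunits : ∀ s : S, IsUnit (algebraMap R (End R N) s))
    (hker : ∀ x, f x = 0 → ∃ s : S, s • x = 0) : IsLocalizedModule S f where
  map_units := hunits
  surj y := by
    obtain ⟨x, rfl⟩ := hf y
    exact ⟨(x, 1), by simp⟩
  exists_of_eq {x₁ x₂} h := by
    obtain ⟨s, hs⟩ := hker (x₁ - x₂) (by rw [map_sub, h, sub_self])
    exact ⟨s, by rwa [smul_sub, sub_eq_zero] at hs⟩

theorem DirectSum.IsInternal.isLocalizedModule_component {ι : Type*} [DecidableEq ι]
    {N : ι → Submodule R M} (h : IsInternal N) (S : Submonoid R) (i : ι)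
    (hunits : ∀ s : S, IsUnit (algebraMap R (End R (N i)) s))
    (hkill : ∃ s : S, ∀ j ≠ i, ∀ x ∈ N j, (s : R) • x = 0) :
    IsLocalizedModule S
      (component R ι (fun j => N j) i ∘ₗ
        (LinearEquiv.ofBijective (coeLinearMap N) h).symm.toLinearMap) := by
  obtain ⟨s, hs⟩ := hkill
  refine .of_surjective S _ (fun y => ⟨y, h.ofBijective_coeLinearMap_same y⟩) hunits ?_
  intro x hx
  set e := LinearEquiv.ofBijective (coeLinearMap N) h
  have hxi : e.symm x i = 0 := hx
  refine ⟨s, e.symm.injective ?_⟩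
  rw [Submonoid.smul_def, map_smul, map_zero]
  ext j : 1
  rw [DirectSum.smul_apply, DirectSum.zero_apply]
  by_cases hj : j = i
  · rw [hj, hxi, smul_zero]
  · exact Subtype.ext (hs j hj _ (e.symm x j).2)

theorem Module.isLocalizedModule_component_torsionBySet_pow {s : Finset (PrimeSpectrum R)}
    (hmax : ∀ p ∈ s, p.asIdeal.IsMaximal) {n : ℕ} [DecidableEq s]
    (hint : IsInternal fun p : s => torsionBySet R M (p.1.asIdeal ^ n : Ideal R)) (q : s) :
    IsLocalizedModule q.1.asIdeal.primeCompl
      (component R s _ q ∘ₗ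
        (LinearEquiv.ofBijective (coeLinearMap _) hint).symm.toLinearMap) := by
  have hq := hmax q q.2
  refine hint.isLocalizedModule_component _ q
    (fun t => isUnit_algebraMap_end_of_isTorsionBySet_pow (torsionBySet_isTorsionBySet _) t.2) ?_
  have hnle : ¬ (Finset.univ.erase q).inf (fun p : s => p.1.asIdeal ^ n) ≤ q.1.asIdeal := by
    rw [Ideal.IsPrime.inf_le' inferInstance]
    rintro ⟨p, hp, hpq⟩
    exact Finset.ne_of_mem_erase hp <| Subtype.ext <| PrimeSpectrum.ext <|
      (hmax p p.2).eq_of_le hq.ne_top (Ideal.IsPrime.le_of_pow_le hpq)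
  obtain ⟨t, ht, htq⟩ := SetLike.not_le_iff_exists.mp hnle
  refine ⟨⟨t, htq⟩, fun p hp x hx => (mem_torsionBySet_iff _ _).mp hx ⟨t, ?_⟩⟩
  exact Finset.inf_le (f := fun p : s => p.1.asIdeal ^ n)
    (Finset.mem_erase.mpr ⟨hp, Finset.mem_univ p⟩) ht

theorem Module.nonempty_linearEquiv_directSum_localizedModule_of_prod_pow_le_annihilator
    {s : Finset (PrimeSpectrum R)} (hmax : ∀ p ∈ s, p.asIdeal.IsMaximal) {n : ℕ}
    (hM : (∏ p ∈ s, p.asIdeal) ^ n ≤ annihilator R M) :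
    Nonempty (M ≃ₗ[R] ⨁ p : s, LocalizedModule p.1.asIdeal.primeCompl M) := by
  classical
  have hcop : (s : Set (PrimeSpectrum R)).Pairwise (IsCoprime on fun p => p.asIdeal ^ n) :=
    fun p hp q hq hpq =>
      have := hmax p hp; have := hmax q hq
      (Ideal.isCoprime_of_isMaximal (PrimeSpectrum.ext_iff.not.mp hpq)).pow
  have htors : IsTorsionBySet R M (⨅ p ∈ s, p.asIdeal ^ n : Ideal R) := by
    rw [isTorsionBySet_iff_subset_annihilator, ← Ideal.prod_eq_iInf_of_pairwise_isCoprime hcop,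
      Finset.prod_pow]
    exact hM
  have hint := torsionBySet_isInternal (fun p hp q hq hpq => (hcop hp hq hpq).sup_eq) htors
  set e := LinearEquiv.ofBijective (coeLinearMap _) hint
  have := isLocalizedModule_component_torsionBySet_pow hmax hint
  exact ⟨e.symm ≪≫ₗ DFinsupp.mapRange.linearEquiv fun q =>
    (IsLocalizedModule.iso _ (component R s _ q ∘ₗ e.symm.toLinearMap)).symm⟩

end

/-- A finite length module over a commutative ring is the direct sum of its localizations
at the finitely many maximal ideals in its support. -/
theorem finiteLength_module_decomposes_over_support
    (A : Type) [CommRing A] (M : Type) [AddCommGroup M] [Module A M]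
    (h : IsFiniteLength A M) :
    ∃ s : Finset (PrimeSpectrum A), (↑s = Module.support A M) ∧
      (∀ p ∈ s, p.asIdeal.IsMaximal) ∧
      Nonempty (M ≃ₗ[A] DirectSum s
        (fun p => LocalizedModule p.1.asIdeal.primeCompl M)) := by
  obtain ⟨_, _⟩ := isFiniteLength_iff_isNoetherian_isArtinian.mp h
  have := isArtinianRing_quotient_annihilator (R := A) (M := M)
  set s := (finite_support_of_isArtinianRing_quotient (R := A) (M := M)).toFinset
  have hs : ↑s = support A M := Set.Finite.coe_toFinset _
  have hmax (p) (hp : p ∈ s) : p.asIdeal.IsMaximal :=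
    isMaximal_of_mem_support_of_isArtinianRing_quotient ((Set.Finite.mem_toFinset _).mp hp)
  obtain ⟨n, hn⟩ := (annihilator A M).exists_radical_pow_le_of_isArtinianRing_quotient
  have hprod := Ideal.pow_right_mono (prod_le_radical_annihilator hs.ge) n
  exact ⟨s, hs, hmax,
    nonempty_linearEquiv_directSum_localizedModule_of_prod_pow_le_annihilator hmax (hprod.trans hn)⟩
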